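/- Let R be a commutative ring and I an ideal of R. Let F ∈ R[X_1,…,X_n]^n be of the form F_i = X_i + (terms of total degree ≥ 2), and suppose the Jacobian determinant of the reduction of F modulo I is a unit of (R/I)[X_1,…,X_n]. Then det(∂F_i/∂X_j) is a unit of the Tate algebra (R,I)⟨X_1,…,X_n⟩. -/

import Mathlib

open MvPowerSeries

/-- Membership in the Tate algebra `(R,I)⟨X_1,…,X_n⟩`: for every `k ≥ 1`, all but finitely
many coefficients lie in `I ^ k`. -/
def TateMem {n : ℕ} {R : Type*} [CommRing R] (I : Ideal R)
    (f : MvPowerSeries (Fin n) R) : Prop :=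
  ∀ k : ℕ, 1 ≤ k → {d : Fin n →₀ ℕ | MvPowerSeries.coeff d f ∉ I ^ k}.Finite

/-- The formal partial derivative of a multivariate power series with respect to `X j`. -/
noncomputable def psDeriv {n : ℕ} {R : Type*} [CommRing R] (j : Fin n)
    (f : MvPowerSeries (Fin n) R) : MvPowerSeries (Fin n) R :=
  fun d => (d j + 1 : ℕ) * MvPowerSeries.coeff (d + Finsupp.single j 1) f

/-- Substitution of the power series `G j` for the variables `X j` in `f`
(the intended use is when each `G j` has zero constant coefficient, in which case
the `finsum` below is a finite sum for each fixed monomial). -/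
noncomputable def psSubst {n : ℕ} {R : Type*} [CommRing R]
    (G : Fin n → MvPowerSeries (Fin n) R) (f : MvPowerSeries (Fin n) R) :
    MvPowerSeries (Fin n) R :=
  fun e => ∑ᶠ d : Fin n →₀ ℕ,
    MvPowerSeries.coeff d f * MvPowerSeries.coeff e (∏ j, G j ^ d j)

/-- `f` is a unit of the Tate algebra `(R,I)⟨X_1,…,X_n⟩`. -/
def TateUnit {n : ℕ} {R : Type*} [CommRing R] (I : Ideal R)
    (f : MvPowerSeries (Fin n) R) : Prop :=
  TateMem I f ∧ ∃ g, TateMem I g ∧ f * g = 1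

/-- The Jacobian conjecture `JC(R,n)`. -/
def JC (R : Type*) [CommRing R] (n : ℕ) : Prop :=
  ∀ F : Fin n → MvPolynomial (Fin n) R,
    IsUnit (Matrix.det (Matrix.of fun i j => MvPolynomial.pderiv j (F i))) →
    ∃ G : Fin n → MvPolynomial (Fin n) R,
      (∀ i, MvPolynomial.bind₁ G (F i) = MvPolynomial.X i) ∧
      (∀ i, MvPolynomial.bind₁ F (G i) = MvPolynomial.X i)

/-- The Tate-Jacobian conjecture `TJC(R,I,n)`. -/
def TJC (R : Type*) [CommRing R] (I : Ideal R) (n : ℕ) : Prop :=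
  ∀ F : Fin n → MvPowerSeries (Fin n) R,
    (∀ i, TateMem I (F i)) →
    (∀ i, MvPowerSeries.constantCoeff (F i) = 0) →
    TateUnit I (Matrix.det (Matrix.of fun i j => psDeriv j (F i))) →
    ∃ G : Fin n → MvPowerSeries (Fin n) R,
      (∀ i, TateMem I (G i)) ∧
      (∀ i, MvPowerSeries.constantCoeff (G i) = 0) ∧
      (∀ i, psSubst G (F i) = MvPowerSeries.X i) ∧
      (∀ i, psSubst F (G i) = MvPowerSeries.X i)


/-! The linear part of `F` is the identity, so `D = det JF` has constant coefficient `1` and has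
an inverse `g` in `R⟦X⟧`. If `Q` is a polynomial lifting the inverse of `D` modulo `I` and
`E = D Q - 1`, then `E` has coefficients in `I` and `g - Q ∑_{m<k} (-E)^m = (-E)^k g` has
coefficients in `I^k`, so `g` is an `I`-adic limit of polynomials. -/

section

variable {σ R : Type*} [CommRing R]

lemma MvPowerSeries.coeff_mul_mem_of_forall_coeff_mem {J : Ideal R} {f : MvPowerSeries σ R}
    (hf : ∀ d, coeff d f ∈ J) (g : MvPowerSeries σ R) (d : σ →₀ ℕ) :
    coeff d (f * g) ∈ J := by
  classical
  rw [coeff_mul]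
  exact J.sum_mem fun x _ => J.mul_mem_right _ (hf x.1)

lemma MvPowerSeries.coeff_pow_mem_pow_of_forall_coeff_mem {I : Ideal R} {f : MvPowerSeries σ R}
    (hf : ∀ d, coeff d f ∈ I) (k : ℕ) (d : σ →₀ ℕ) : coeff d (f ^ k) ∈ I ^ k := by
  classical
  induction k generalizing d with
  | zero => simp [Ideal.one_eq_top]
  | succ k ih =>
    rw [pow_succ, pow_succ, coeff_mul]
    exact Ideal.sum_mem _ fun x _ => Ideal.mul_mem_mul (ih x.1) (hf x.2)

lemma MvPolynomial.constantCoeff_pderiv (j : σ) (p : MvPolynomial σ R) :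
    constantCoeff (pderiv j p) = coeff (Finsupp.single j 1) p := by
  simp [constantCoeff_eq, coeff_pderiv]

lemma MvPolynomial.constantCoeff_det_jacobian [Fintype σ] [DecidableEq σ]
    (F : σ → MvPolynomial σ R) :
    constantCoeff (Matrix.of fun i j => pderiv j (F i)).det =
      (Matrix.of fun i j => coeff (Finsupp.single j 1) (F i)).det := by
  rw [RingHom.map_det]
  congr 1
  ext i j
  exact constantCoeff_pderiv j (F i)

end

section

variable {n : ℕ} {R : Type*} [CommRing R] {I : Ideal R}

lemma tateMem_of_forall_exists_mvPolynomial {f : MvPowerSeries (Fin n) R}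
    (h : ∀ k, ∃ P : MvPolynomial (Fin n) R,
      ∀ d, coeff d (f - (P : MvPowerSeries (Fin n) R)) ∈ I ^ k) :
    TateMem I f := by
  intro k _
  obtain ⟨P, hP⟩ := h k
  refine P.support.finite_toSet.subset fun d hd => ?_
  by_contra hdP
  rw [Finset.mem_coe, MvPolynomial.notMem_support_iff] at hdP
  exact hd (by simpa [hdP] using hP d)

lemma tateMem_coe (p : MvPolynomial (Fin n) R) : TateMem I (p : MvPowerSeries (Fin n) R) :=
  tateMem_of_forall_exists_mvPolynomial fun _ => ⟨p, by simp⟩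

theorem tateUnit_coe_of_isUnit {p : MvPolynomial (Fin n) R}
    (hp : IsUnit (MvPolynomial.constantCoeff p))
    (hpI : IsUnit (MvPolynomial.map (Ideal.Quotient.mk I) p)) :
    TateUnit I (p : MvPowerSeries (Fin n) R) := by
  obtain ⟨g, hg⟩ : ∃ g, (p : MvPowerSeries (Fin n) R) * g = 1 :=
    isUnit_iff_exists_inv.mp (isUnit_iff_constantCoeff.mpr (by
      rwa [← coeff_zero_eq_constantCoeff_apply, MvPolynomial.coeff_coe,
        ← MvPolynomial.constantCoeff_eq]))
  refine ⟨tateMem_coe p, g, ?_, hg⟩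
  obtain ⟨Q, hQ⟩ : ∃ Q, MvPolynomial.map (Ideal.Quotient.mk I) (p * Q) = 1 := by
    obtain ⟨v, hv⟩ := isUnit_iff_exists_inv.mp hpI
    obtain ⟨Q, rfl⟩ := MvPolynomial.map_surjective _ Ideal.Quotient.mk_surjective v
    exact ⟨Q, by rw [map_mul, hv]⟩
  set E := p * Q - 1 with hE
  have hcoe (P : MvPolynomial (Fin n) R) :
      (P : MvPowerSeries (Fin n) R) = MvPolynomial.coeToMvPowerSeries.ringHom P := rfl
  set e : MvPowerSeries (Fin n) R := (E : MvPowerSeries (Fin n) R)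
  have hEI : ∀ d, coeff d (-e) ∈ I := fun d => by
    rw [map_neg, MvPolynomial.coeff_coe, neg_mem_iff, ← Ideal.Quotient.eq_zero_iff_mem,
      ← MvPolynomial.coeff_map, hE, map_sub, hQ, map_one, sub_self, MvPolynomial.coeff_zero]
  have hQg : (Q : MvPowerSeries (Fin n) R) = g * (1 - -e) := by
    have he : e = p * Q - 1 := by simp only [e, hE, hcoe, map_sub, map_mul, map_one]
    linear_combination -(Q : MvPowerSeries (Fin n) R) * hg - g * he
  refine tateMem_of_forall_exists_mvPolynomial fun k =>
    ⟨(∑ m ∈ Finset.range k, (-E) ^ m) * Q, fun d => ?_⟩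
  have hrem : g - (((∑ m ∈ Finset.range k, (-E) ^ m) * Q : MvPolynomial (Fin n) R) :
      MvPowerSeries (Fin n) R) = (-e) ^ k * g := by
    calc _ = g - g * ((1 - -e) * ∑ m ∈ Finset.range k, (-e) ^ m) := by
          simp only [e, hcoe, map_mul, map_sum, map_pow, map_neg] at hQg ⊢
          rw [hQg]
          ring
      _ = (-e) ^ k * g := by
          rw [mul_neg_geom_sum]
          ring
  rw [hrem]
  exact coeff_mul_mem_of_forall_coeff_mem (coeff_pow_mem_pow_of_forall_coeff_mem hEI k) g d

end

/-- If `F ∈ R[X_1,…,X_n]ⁿ` has the form `F_i = X_i + (terms of total degree ≥ 2)` and the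
Jacobian determinant of the reduction of `F` mod `I` is a unit of `(R/I)[X_1,…,X_n]`, then
`det JF` is a unit of the Tate algebra `(R,I)⟨X_1,…,X_n⟩`. -/
theorem stmt_12 (R : Type*) [CommRing R] (I : Ideal R) (n : ℕ)
    (F : Fin n → MvPolynomial (Fin n) R)
    (hform : ∀ i, ∀ d : Fin n →₀ ℕ, (d.sum fun _ v => v) < 2 →
      MvPolynomial.coeff d (F i - MvPolynomial.X i) = 0)
    (hdet : IsUnit (Matrix.det (Matrix.of fun i j =>
      MvPolynomial.pderiv j (MvPolynomial.map (Ideal.Quotient.mk I) (F i))))) :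
    TateUnit I ((Matrix.det (Matrix.of fun i j => MvPolynomial.pderiv j (F i)) :
      MvPolynomial (Fin n) R) : MvPowerSeries (Fin n) R) := by
  have hlin : (Matrix.of fun i j => MvPolynomial.coeff (Finsupp.single j 1) (F i)) = 1 := by
    ext i j
    have hij := hform i (Finsupp.single j 1) (by simp)
    rw [MvPolynomial.coeff_sub, MvPolynomial.coeff_X, sub_eq_zero] at hij
    simp [hij, Matrix.one_apply, Finsupp.single_left_inj]
  apply tateUnit_coe_of_isUnit
  · rw [MvPolynomial.constantCoeff_det_jacobian, hlin, Matrix.det_one]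
    exact isUnit_one
  · convert hdet
    rw [RingHom.map_det, RingHom.mapMatrix_apply]
    congr 1
    ext i j
    simp [MvPolynomial.pderiv_map]
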